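/- arXiv:1309.1779 — 2 statements merged into one kernel-verified Lean document; each statement's English description precedes it below -/
import Mathlib

section
/- Let N, s, t : ℕ → ℝ with 1 ≤ N(x) ≤ s(x)·t(x), 2 ≤ s(x) ≤ t(x), and t(x) → ∞. If liminf_{x→∞} log(N(x))/log(s(x)·t(x)) = 1, then liminf_{x→∞} log(N(x))/log(t(x)) = 1 + liminf_{x→∞} log(s(x))/log(t(x)). -/
open Filter Real Topology

theorem equiv_UBC_forward (N s t : ℕ → ℝ)
    (hN1 : ∀ x, 1 ≤ N x) (hNst : ∀ x, N x ≤ s x * t x)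
    (hs2 : ∀ x, 2 ≤ s x) (hst : ∀ x, s x ≤ t x)
    (ht : Tendsto t atTop atTop)
    (h : Filter.liminf (fun x => Real.log (N x) / Real.log (s x * t x)) atTop = 1) :
    Filter.liminf (fun x => Real.log (N x) / Real.log (t x)) atTop =
      1 + Filter.liminf (fun x => Real.log (s x) / Real.log (t x)) atTop := by
  set u : ℕ → ℝ := fun x => Real.log (N x) / Real.log (s x * t x) with hu
  set g : ℕ → ℝ := fun x => Real.log (s x) / Real.log (t x) with hg
  set v : ℕ → ℝ := fun x => 1 + g x with hv
  have hs1 : ∀ x, (1:ℝ) < s x := fun x => lt_of_lt_of_le one_lt_two (hs2 x)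
  have ht1 : ∀ x, (1:ℝ) < t x := fun x => lt_of_lt_of_le (hs1 x) (hst x)
  have hlogs : ∀ x, 0 < Real.log (s x) := fun x => Real.log_pos (hs1 x)
  have hlogt : ∀ x, 0 < Real.log (t x) := fun x => Real.log_pos (ht1 x)
  have hlogst : ∀ x, Real.log (s x * t x) = Real.log (s x) + Real.log (t x) := fun x =>
    Real.log_mul (by linarith [hs1 x]) (by linarith [ht1 x])
  have hsumpos : ∀ x, 0 < Real.log (s x) + Real.log (t x) := fun x =>
    add_pos (hlogs x) (hlogt x)
  -- bounds on u
  have hu0 : ∀ x, 0 ≤ u x := fun x =>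
    div_nonneg (Real.log_nonneg (hN1 x)) (by rw [hlogst x]; exact (hsumpos x).le)
  have hu1 : ∀ x, u x ≤ 1 := by
    intro x
    rw [hu]
    rw [div_le_one (by rw [hlogst x]; exact hsumpos x)]
    exact Real.log_le_log (by linarith [hN1 x]) (hNst x)
  -- bounds on g
  have hg0 : ∀ x, 0 ≤ g x := fun x => div_nonneg (hlogs x).le (hlogt x).le
  have hg1 : ∀ x, g x ≤ 1 := fun x => by
    rw [hg, div_le_one (hlogt x)]
    exact Real.log_le_log (by linarith [hs1 x]) (hst x)
  have hv1 : ∀ x, 1 ≤ v x := fun x => by simp [hv]; linarith [hg0 x]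
  have hv2 : ∀ x, v x ≤ 2 := fun x => by simp only [hv]; linarith [hg1 x]
  -- boundedness facts
  have hub : IsBoundedUnder (· ≤ ·) atTop u := isBoundedUnder_of ⟨1, hu1⟩
  have hub' : IsBoundedUnder (· ≥ ·) atTop u := isBoundedUnder_of ⟨0, hu0⟩
  have hvb : IsBoundedUnder (· ≤ ·) atTop v := isBoundedUnder_of ⟨2, hv2⟩
  have hvb' : IsBoundedUnder (· ≥ ·) atTop v := isBoundedUnder_of ⟨1, hv1⟩
  have hgb : IsBoundedUnder (· ≤ ·) atTop g := isBoundedUnder_of ⟨1, hg1⟩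
  have hgb' : IsBoundedUnder (· ≥ ·) atTop g := isBoundedUnder_of ⟨0, hg0⟩
  -- limsup u = 1
  have hlimsup : limsup u atTop = 1 := by
    have h1 : limsup u atTop ≤ 1 :=
      limsup_le_of_le hub'.isCoboundedUnder_le (Eventually.of_forall hu1)
    have h2 : (1:ℝ) ≤ limsup u atTop := h ▸ liminf_le_limsup hub hub'
    linarith
  -- key identity
  have hid : (fun x => Real.log (N x) / Real.log (t x)) = u * v := by
    funext x
    show Real.log (N x) / Real.log (t x) = u x * v x
    have hv' : v x = (Real.log (s x) + Real.log (t x)) / Real.log (t x) := by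
      rw [hv, hg, add_div, div_self (hlogt x).ne']
      ring
    rw [hv', hu]
    simp only
    rw [hlogst x, div_mul_div_comm, mul_comm (Real.log (N x)),
      mul_div_mul_left _ _ (hsumpos x).ne']
  rw [hid]
  have h1 : liminf (u * v) atTop ≤ liminf v atTop := by
    have := liminf_mul_le (f := atTop) (u := u) (v := v)
      (Eventually.of_forall hu0) hub (Eventually.of_forall (fun x => (hv1 x).trans' zero_le_one))
      hvb.isCoboundedUnder_ge
    rwa [hlimsup, one_mul] at this
  have h2 : liminf v atTop ≤ liminf (u * v) atTop := by
    have := le_liminf_mul (f := atTop) (u := u) (v := v)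
      (Eventually.of_forall hu0) hub (Eventually.of_forall (fun x => (hv1 x).trans' zero_le_one))
      hvb.isCoboundedUnder_ge
    rwa [h, one_mul] at this
  have h3 : liminf (u * v) atTop = liminf v atTop := le_antisymm h1 h2
  rw [h3, hv]
  exact liminf_const_add atTop g 1 hgb.isCoboundedUnder_ge hgb'
end

section
/- Define the runtime of Turing machine 1728529 by t(x) = 2(x−2)+9 if x is even and t(x) = 2(x−1)+3·2^((x−1)/2+1)+5 if x is odd. Then liminf_{x→∞} t(x)/x = 2 while limsup_{x→∞} log(t(x))/x = (log 2)/2; in particular liminf_{x→∞} log(t(x))/log(x) = 1. -/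
open Filter Real Topology

/-- Runtime of TM 1728529: linear on even inputs, exponential on odd inputs. -/
noncomputable def t1728529 (x : ℕ) : ℝ :=
  if Even x then 2 * ((x : ℝ) - 2) + 9
  else 2 * ((x : ℝ) - 1) + 3 * 2 ^ ((x - 1) / 2 + 1) + 5

lemma my_le_of_forall_pos_le_add {a b : ℝ} (h : ∀ ε : ℝ, 0 < ε → a ≤ b + ε) : a ≤ b := by
  by_contra hc
  push_neg at hc
  have := h ((a - b) / 2) (by linarith)
  linarith

lemma t_even' (m : ℕ) : t1728529 (2 * m) = 4 * (m : ℝ) + 5 := by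
  rw [t1728529, if_pos ⟨m, two_mul m⟩]
  push_cast
  ring

lemma t_odd' (k : ℕ) : t1728529 (2 * k + 1) = 4 * (k : ℝ) + 3 * 2 ^ (k + 1) + 5 := by
  rw [t1728529, if_neg (by simp [Nat.even_add_one, parity_simps])]
  have h : (2 * k + 1 - 1) / 2 + 1 = k + 1 := by omega
  rw [h]
  push_cast
  ring

lemma nat_pow_lb1 : ∀ m : ℕ, 5 ≤ m → 4 * m + 5 ≤ 2 ^ m := by
  intro m hm
  induction m with
  | zero => omega
  | succ n ih =>
    rcases Nat.lt_or_ge n 5 with h | h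
    · have hn : n = 4 := by omega
      subst hn; norm_num
    · have := ih (by omega)
      rw [pow_succ]
      omega

lemma nat_pow_lb2 : ∀ k : ℕ, 4 ≤ k → 4 * k + 5 ≤ 2 * 2 ^ k := by
  intro k hk
  induction k with
  | zero => omega
  | succ n ih =>
    rcases Nat.lt_or_ge n 4 with h | h
    · have hn : n = 3 := by omega
      subst hn; norm_num
    · have := ih (by omega)
      rw [pow_succ]
      omega

lemma t_ge_2x (x : ℕ) : 2 * (x : ℝ) ≤ t1728529 x := by
  rcases Nat.even_or_odd x with ⟨m, hm⟩ | ⟨k, hk⟩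
  · have : x = 2 * m := by omega
    subst this
    rw [t_even']
    push_cast
    linarith
  · subst hk
    rw [t_odd']
    have : (0:ℝ) ≤ 3 * 2 ^ (k + 1) := by positivity
    push_cast
    linarith

lemma t_ge_one (x : ℕ) : (1 : ℝ) ≤ t1728529 x := by
  rcases Nat.even_or_odd x with ⟨m, hm⟩ | ⟨k, hk⟩
  · have : x = 2 * m := by omega
    subst this
    rw [t_even']
    have : (0:ℝ) ≤ (m:ℝ) := Nat.cast_nonneg m
    linarith
  · subst hk
    rw [t_odd']
    have h1 : (0:ℝ) ≤ 3 * 2 ^ (k + 1) := by positivity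
    have : (0:ℝ) ≤ (k:ℝ) := Nat.cast_nonneg k
    linarith

lemma t_pos (x : ℕ) : (0 : ℝ) < t1728529 x := lt_of_lt_of_le one_pos (t_ge_one x)

lemma log_t_nonneg (x : ℕ) : 0 ≤ Real.log (t1728529 x) :=
  Real.log_nonneg (t_ge_one x)

lemma log_t_ub (x : ℕ) (hx : 10 ≤ x) :
    Real.log (t1728529 x) ≤ ((x : ℝ) + 7) / 2 * Real.log 2 := by
  have hlog2 : (0:ℝ) ≤ Real.log 2 := Real.log_nonneg (by norm_num)
  rcases Nat.even_or_odd x with ⟨m, hm⟩ | ⟨k, hk⟩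
  · have hxm : x = 2 * m := by omega
    subst hxm
    have hm5 : 5 ≤ m := by omega
    have hnat := nat_pow_lb1 m hm5
    have hcast : (4 * (m:ℝ) + 5) ≤ 2 ^ m := by
      have := (Nat.cast_le (α := ℝ)).mpr hnat
      push_cast at this
      linarith
    rw [t_even']
    calc Real.log (4 * (m:ℝ) + 5) ≤ Real.log ((2:ℝ) ^ m) := by
          apply Real.log_le_log (by positivity) hcast
      _ = (m : ℝ) * Real.log 2 := Real.log_pow 2 m
      _ ≤ ((2 * (m:ℕ) : ℕ) + 7 : ℝ) / 2 * Real.log 2 := by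
          apply mul_le_mul_of_nonneg_right _ hlog2
          push_cast
          linarith
  · subst hk
    have hk4 : 4 ≤ k := by omega
    have hnat := nat_pow_lb2 k hk4
    have hcast : (4 * (k:ℝ) + 5) ≤ 2 * 2 ^ k := by
      have := (Nat.cast_le (α := ℝ)).mpr hnat
      push_cast at this
      linarith
    rw [t_odd']
    have hle : 4 * (k:ℝ) + 3 * 2 ^ (k + 1) + 5 ≤ (2:ℝ) ^ (k + 3) := by
      have h1 : (3:ℝ) * 2 ^ (k+1) = 6 * 2 ^ k := by ring
      have h2 : (2:ℝ) ^ (k+3) = 8 * 2 ^ k := by ring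
      rw [h1, h2]
      linarith
    calc Real.log (4 * (k:ℝ) + 3 * 2 ^ (k + 1) + 5) ≤ Real.log ((2:ℝ) ^ (k + 3)) := by
          apply Real.log_le_log _ hle
          have : (0:ℝ) < 3 * 2 ^ (k+1) := by positivity
          have : (0:ℝ) ≤ (k:ℝ) := Nat.cast_nonneg k
          linarith
      _ = ((k : ℝ) + 3) * Real.log 2 := by
          rw [Real.log_pow]
          push_cast
          ring
      _ ≤ (((2 * k + 1 : ℕ) : ℝ) + 7) / 2 * Real.log 2 := by
          apply mul_le_mul_of_nonneg_right _ hlog2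
          push_cast
          linarith

lemma log_t_lb_odd (k : ℕ) :
    ((k : ℝ) + 1) * Real.log 2 ≤ Real.log (t1728529 (2 * k + 1)) := by
  rw [t_odd']
  have hle : (2:ℝ) ^ (k + 1) ≤ 4 * (k:ℝ) + 3 * 2 ^ (k + 1) + 5 := by
    have h1 : (0:ℝ) ≤ 2 ^ (k+1) := by positivity
    have : (0:ℝ) ≤ (k:ℝ) := Nat.cast_nonneg k
    linarith
  calc ((k : ℝ) + 1) * Real.log 2 = Real.log ((2:ℝ) ^ (k + 1)) := by
        rw [Real.log_pow]; push_cast; ring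
    _ ≤ _ := Real.log_le_log (by positivity) hle

theorem tm1728529_alternating_runtime :
    Filter.liminf (fun x : ℕ => t1728529 x / x) atTop = 2 ∧
    Filter.limsup (fun x : ℕ => Real.log (t1728529 x) / x) atTop = Real.log 2 / 2 ∧
    Filter.liminf (fun x : ℕ => Real.log (t1728529 x) / Real.log x) atTop = 1 := by
  have hlog2pos : (0:ℝ) < Real.log 2 := Real.log_pos (by norm_num)
  -- Part 1
  have hA : ∀ᶠ x : ℕ in atTop, (2:ℝ) ≤ t1728529 x / x := by
    filter_upwards [eventually_ge_atTop 1] with x hx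
    have hx0 : (0:ℝ) < (x:ℝ) := by exact_mod_cast hx
    rw [le_div_iff₀ hx0]
    exact t_ge_2x x
  have hbdd1 : IsBoundedUnder (· ≥ ·) atTop (fun x : ℕ => t1728529 x / x) :=
    ⟨2, by simpa [eventually_map] using hA⟩
  have hfreq1 : ∀ ε : ℝ, 0 < ε → ∃ᶠ x : ℕ in atTop, t1728529 x / x ≤ 2 + ε := by
    intro ε hε
    rw [frequently_atTop]
    intro a
    set m := max a (Nat.ceil (5 / (2 * ε)) + 1) with hm
    refine ⟨2 * m, ?_, ?_⟩
    · have : a ≤ m := le_max_left _ _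
      omega
    · have hm1 : 1 ≤ m := by
        have : Nat.ceil (5 / (2 * ε)) + 1 ≤ m := le_max_right _ _
        omega
      have hmε : 5 / (2 * ε) ≤ (m : ℝ) := by
        have h1 : (Nat.ceil (5 / (2 * ε)) : ℝ) ≥ 5 / (2 * ε) := Nat.le_ceil _
        have h2 : Nat.ceil (5 / (2 * ε)) ≤ m := le_trans (Nat.le_succ _) (le_max_right _ _)
        have := (Nat.cast_le (α := ℝ)).mpr h2
        linarith
      have hm0 : (0:ℝ) < (m:ℝ) := by exact_mod_cast hm1
      rw [t_even']
      have hx0 : (0:ℝ) < ((2 * m : ℕ) : ℝ) := by positivity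
      rw [div_le_iff₀ hx0]
      push_cast
      have h5 : (5:ℝ) ≤ 2 * ε * m := by
        rw [div_le_iff₀ (by positivity)] at hmε
        linarith
      nlinarith
  have h1le : Filter.liminf (fun x : ℕ => t1728529 x / x) atTop ≤ 2 := by
    apply my_le_of_forall_pos_le_add
    intro ε hε
    exact liminf_le_of_frequently_le (hfreq1 ε hε) hbdd1
  have h1ge : (2:ℝ) ≤ Filter.liminf (fun x : ℕ => t1728529 x / x) atTop :=
    le_liminf_of_le (IsCoboundedUnder.of_frequently_le (a := 3)
      ((hfreq1 1 one_pos).mono (fun x hx => by linarith))) hA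
  -- Part 2
  have hub2 : ∀ᶠ x : ℕ in atTop, Real.log (t1728529 x) / x ≤ ((x:ℝ) + 7) / (2 * x) * Real.log 2 := by
    filter_upwards [eventually_ge_atTop 10] with x hx
    have hx0 : (0:ℝ) < (x:ℝ) := by exact_mod_cast (by omega : 0 < x)
    rw [div_le_iff₀ hx0]
    calc Real.log (t1728529 x) ≤ ((x:ℝ) + 7) / 2 * Real.log 2 := log_t_ub x hx
      _ = ((x:ℝ) + 7) / (2 * x) * Real.log 2 * x := by field_simp
  have hub2' : ∀ ε : ℝ, 0 < ε →
      ∀ᶠ x : ℕ in atTop, Real.log (t1728529 x) / x ≤ Real.log 2 / 2 + ε := by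
    intro ε hε
    have hN : ∀ᶠ x : ℕ in atTop, (7 * Real.log 2) / (2 * ε) ≤ (x:ℝ) :=
      tendsto_natCast_atTop_atTop.eventually_ge_atTop _
    filter_upwards [hub2, hN, eventually_ge_atTop 1] with x hx hNx hx1
    have hx0 : (0:ℝ) < (x:ℝ) := by exact_mod_cast hx1
    have key : ((x:ℝ) + 7) / (2 * x) * Real.log 2 ≤ Real.log 2 / 2 + ε := by
      rw [div_mul_eq_mul_div, div_le_iff₀ (by positivity)]
      have h7 : 7 * Real.log 2 ≤ 2 * ε * x := by
        rw [div_le_iff₀ (by positivity)] at hNx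
        linarith
      nlinarith
    linarith
  have hfreq2 : ∃ᶠ x : ℕ in atTop, Real.log 2 / 2 ≤ Real.log (t1728529 x) / x := by
    rw [frequently_atTop]
    intro a
    refine ⟨2 * a + 1, by omega, ?_⟩
    have hx0 : (0:ℝ) < ((2 * a + 1 : ℕ) : ℝ) := by positivity
    rw [le_div_iff₀ hx0]
    calc Real.log 2 / 2 * ((2 * a + 1 : ℕ) : ℝ) ≤ ((a:ℝ) + 1) * Real.log 2 := by
          push_cast
          nlinarith [hlog2pos.le]
      _ ≤ Real.log (t1728529 (2 * a + 1)) := log_t_lb_odd a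
  have hbdd2 : IsBoundedUnder (· ≤ ·) atTop (fun x : ℕ => Real.log (t1728529 x) / x) := by
    refine ⟨Real.log 2 / 2 + 1, ?_⟩
    rw [eventually_map]
    exact hub2' 1 one_pos
  have h2ge : Real.log 2 / 2 ≤ Filter.limsup (fun x : ℕ => Real.log (t1728529 x) / x) atTop :=
    le_limsup_of_frequently_le hfreq2 hbdd2
  have h2le : Filter.limsup (fun x : ℕ => Real.log (t1728529 x) / x) atTop ≤ Real.log 2 / 2 := by
    apply my_le_of_forall_pos_le_add
    intro ε hε
    exact limsup_le_of_le (IsCoboundedUnder.of_frequently_ge hfreq2) (hub2' ε hε)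
  -- Part 3
  have hA3 : ∀ᶠ x : ℕ in atTop, (1:ℝ) ≤ Real.log (t1728529 x) / Real.log x := by
    filter_upwards [eventually_ge_atTop 2] with x hx
    have hx2 : (2:ℝ) ≤ (x:ℝ) := by exact_mod_cast hx
    have hlogx : (0:ℝ) < Real.log x := Real.log_pos (by linarith)
    rw [le_div_iff₀ hlogx, one_mul]
    apply Real.log_le_log (by linarith)
    have := t_ge_2x x
    linarith
  have hbdd3 : IsBoundedUnder (· ≥ ·) atTop
      (fun x : ℕ => Real.log (t1728529 x) / Real.log x) :=
    ⟨1, by simpa [eventually_map] using hA3⟩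
  have hfreq3 : ∀ ε : ℝ, 0 < ε →
      ∃ᶠ x : ℕ in atTop, Real.log (t1728529 x) / Real.log x ≤ 1 + ε := by
    intro ε hε
    rw [frequently_atTop]
    intro a
    set m := max a (max 1 (Nat.ceil (Real.exp (Real.log 7 / ε)))) with hm
    refine ⟨2 * m, ?_, ?_⟩
    · have : a ≤ m := le_max_left _ _
      omega
    · have hm1 : 1 ≤ m := le_trans (le_max_left _ _) (le_max_right _ _)
      have hm0 : (0:ℝ) < (m:ℝ) := by exact_mod_cast hm1
      have hm1' : (1:ℝ) ≤ (m:ℝ) := by exact_mod_cast hm1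
      have hmexp : Real.exp (Real.log 7 / ε) ≤ (m:ℝ) := by
        have h2 : Nat.ceil (Real.exp (Real.log 7 / ε)) ≤ m :=
          le_trans (le_max_right _ _) (le_max_right _ _)
        have := (Nat.cast_le (α := ℝ)).mpr h2
        have h1 := Nat.le_ceil (Real.exp (Real.log 7 / ε))
        linarith
      have hxval : ((2 * m : ℕ) : ℝ) = 2 * (m:ℝ) := by push_cast; ring
      have hx2 : (2:ℝ) ≤ ((2 * m : ℕ) : ℝ) := by rw [hxval]; linarith
      have hlogx : (0:ℝ) < Real.log ((2 * m : ℕ) : ℝ) := Real.log_pos (by linarith)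
      rw [t_even', div_le_iff₀ hlogx]
      have hlog7 : Real.log 7 / ε ≤ Real.log ((2 * m : ℕ) : ℝ) := by
        calc Real.log 7 / ε = Real.log (Real.exp (Real.log 7 / ε)) := (Real.log_exp _).symm
          _ ≤ Real.log ((m:ℝ)) := Real.log_le_log (Real.exp_pos _) hmexp
          _ ≤ Real.log ((2 * m : ℕ) : ℝ) := by
              apply Real.log_le_log hm0
              rw [hxval]; linarith
      have hstep : Real.log (4 * (m:ℝ) + 5) ≤ Real.log ((2 * m : ℕ) : ℝ) + Real.log 7 := by
        have h75 : 4 * (m:ℝ) + 5 ≤ 7 * ((2 * m : ℕ) : ℝ) := by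
          rw [hxval]; linarith
        calc Real.log (4 * (m:ℝ) + 5) ≤ Real.log (7 * ((2 * m : ℕ) : ℝ)) :=
              Real.log_le_log (by linarith) h75
          _ = Real.log 7 + Real.log ((2 * m : ℕ) : ℝ) := Real.log_mul (by norm_num) (by positivity)
          _ = _ := by ring
      have h7ε : Real.log 7 ≤ ε * Real.log ((2 * m : ℕ) : ℝ) := by
        rw [div_le_iff₀ hε] at hlog7
        linarith
      calc Real.log (4 * (m:ℝ) + 5) ≤ Real.log ((2 * m : ℕ) : ℝ) + Real.log 7 := hstep
        _ ≤ Real.log ((2 * m : ℕ) : ℝ) + ε * Real.log ((2 * m : ℕ) : ℝ) := by linarith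
        _ = (1 + ε) * Real.log ((2 * m : ℕ) : ℝ) := by ring
  have h3le : Filter.liminf (fun x : ℕ => Real.log (t1728529 x) / Real.log x) atTop ≤ 1 := by
    apply my_le_of_forall_pos_le_add
    intro ε hε
    exact liminf_le_of_frequently_le (hfreq3 ε hε) hbdd3
  have h3ge : (1:ℝ) ≤ Filter.liminf (fun x : ℕ => Real.log (t1728529 x) / Real.log x) atTop :=
    le_liminf_of_le (IsCoboundedUnder.of_frequently_le (a := 2)
      ((hfreq3 1 one_pos).mono (fun x hx => by linarith))) hA3
  exact ⟨le_antisymm h1le h1ge, le_antisymm h2le h2ge, le_antisymm h3le h3ge⟩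
end
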